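/- The function H(M) = Σ over complete flags A_1 ⊂ A_2 ⊂ ... ⊂ A_n = [n] (with |A_i| = i) of the tuple ((A_1, r_M(A_1)), ..., (A_n, r_M(A_n))), valued in the free abelian group generated by such tuples, is a valuation under matroid subdivisions. -/

import Mathlib

open Finset
open scoped Pointwise

/-- The indicator vector `e_B ∈ ℝⁿ` of a subset `B ⊆ [n]`. -/
def indVec (n : ℕ) (B : Finset (Fin n)) : Fin n → ℝ := fun i => if i ∈ B then 1 else 0

/-- A collection of subsets of `[n]` is the collection of bases of a matroid
(possibly the empty matroid) iff it satisfies the basis exchange axiom. -/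
def IsBases {n : ℕ} (𝓑 : Finset (Finset (Fin n))) : Prop :=
  ∀ B₁ ∈ 𝓑, ∀ B₂ ∈ 𝓑, ∀ b₁ ∈ B₁ \ B₂, ∃ b₂ ∈ B₂ \ B₁, insert b₂ (B₁.erase b₁) ∈ 𝓑

/-- The matroid (basis) polytope: convex hull of indicator vectors of the bases. -/
def polytope {n : ℕ} (𝓑 : Finset (Finset (Fin n))) : Set (Fin n → ℝ) :=
  convexHull ℝ (indVec n '' ↑𝓑)

/-- The rank of a subset `A` in the matroid with bases `𝓑`:
the maximal size of an intersection of `A` with a basis. -/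
def mrank {n : ℕ} (𝓑 : Finset (Finset (Fin n))) (A : Finset (Fin n)) : ℕ :=
  𝓑.sup fun B => (A ∩ B).card

/-- A subdivision of a polytope `P` into polytopes `Ps i`: their union is `P`,
their vertices are vertices of `P`, and each pairwise intersection is a proper
(exposed) face of both pieces. -/
def IsSubdivision {n m : ℕ} (P : Set (Fin n → ℝ)) (Ps : Fin m → Set (Fin n → ℝ)) : Prop :=
  (⋃ i, Ps i) = P ∧
  (∀ i, Set.extremePoints ℝ (Ps i) ⊆ Set.extremePoints ℝ P) ∧
  ∀ i j, i ≠ j →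
    IsExposed ℝ (Ps i) (Ps i ∩ Ps j) ∧ IsExposed ℝ (Ps j) (Ps i ∩ Ps j) ∧
    Ps i ∩ Ps j ≠ Ps i ∧ Ps i ∩ Ps j ≠ Ps j

/-- A matroid subdivision of the matroid `𝓑` into the matroids `𝓜 i`. -/
def IsMatroidSubdivision {n m : ℕ} (𝓑 : Finset (Finset (Fin n)))
    (𝓜 : Fin m → Finset (Finset (Fin n))) : Prop :=
  IsBases 𝓑 ∧ (∀ i, IsBases (𝓜 i)) ∧ IsSubdivision (polytope 𝓑) fun i => polytope (𝓜 i)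

open Classical in
/-- For `A ⊆ [m]`, the matroid `M_A` whose polytope is `⋂_{a ∈ A} Q(M_a)`:
its bases are the bases of `M` whose indicator vector lies in every `Q(M_a)`, `a ∈ A`.
For `A = ∅` this is `M` itself. -/
noncomputable def interMatroid {n m : ℕ} (𝓑 : Finset (Finset (Fin n)))
    (𝓜 : Fin m → Finset (Finset (Fin n))) (A : Finset (Fin m)) : Finset (Finset (Fin n)) :=
  𝓑.filter fun B => ∀ a ∈ A, indVec n B ∈ polytope (𝓜 a)

/-- `f` is a valuation under matroid subdivisions:
`∑_{A ⊆ [m]} (-1)^{|A|} f(M_A) = 0` for every matroid subdivision. -/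
def IsValuation {n : ℕ} {G : Type*} [AddCommGroup G] (f : Finset (Finset (Fin n)) → G) : Prop :=
  ∀ (m : ℕ) (𝓑 : Finset (Finset (Fin n))) (𝓜 : Fin m → Finset (Finset (Fin n))),
    IsMatroidSubdivision 𝓑 𝓜 →
    ∑ A : Finset (Fin m), (-1 : ℤ) ^ A.card • f (interMatroid 𝓑 𝓜 A) = 0

open Classical in
/-- `H(M) = ∑ ((A_1, r_M(A_1)), …, (A_n, r_M(A_n)))`, summed over all maximal flags
`A_1 ⊂ ⋯ ⊂ A_n` of subsets of `[n]` with `|A_i| = i`, with `H(∅) = 0`. -/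
noncomputable def flagH {n : ℕ} (𝓑 : Finset (Finset (Fin n))) :
    FreeAbelianGroup (Fin n → Finset (Fin n) × ℕ) :=
  if 𝓑 = ∅ then 0 else
    ∑ C ∈ Finset.univ.filter fun C : Fin n → Finset (Fin n) =>
        (∀ i, (C i).card = (i : ℕ) + 1) ∧ ∀ i j, i ≤ j → C i ⊆ C j,
      FreeAbelianGroup.of fun i => (C i, mrank 𝓑 (C i))

/-!
Fix a maximal flag `C` and weight `e ∈ [n]` by `2 ^ #{i | e ∈ C i}`. Distinct sets then have
distinct weights, and by the greedy property of matroids the heaviest basis `B` of a matroid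
satisfies `r(C i) = #(C i ∩ B)` for all `i` at once. Each `M_A` is a face of some `Q(M_a)`, i.e.
its bases are the bases of `M_a` maximising a linear functional; refining that functional
lexicographically by the flag weight shows that the same holds for `M_A`. So the `C`-summand of
`H(M_A)` is read off from the heaviest basis of `M_A`, and it suffices to show that for each
basis `B` of `M` the `A` for which `B` is heaviest in `M_A` have vanishing signed count. These
are the `A ⊆ T = {a | B ∈ M_a}` for which `M_A` has no basis heavier than `B`. The remaining
`A ⊆ T` have vanishing signed count by an Euler characteristic argument: near `e_B` only the
pieces indexed by `T` occur, and the parts of the `Q(M_A)` near `e_B` that are heavier than `e_B`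
by a fixed margin are compact convex sets, nonempty iff `M_A` has a heavier basis, whose indicator
functions cancel in the alternating sum by inclusion–exclusion.
-/

section

variable {n : ℕ}

lemma indVec_injective : Function.Injective (indVec n) := by
  intro B₁ B₂ h
  ext e
  have he := congrFun h e
  by_cases h₁ : e ∈ B₁ <;> by_cases h₂ : e ∈ B₂ <;> simp_all [indVec]

lemma indVec_mem_polytope {𝓝 : Finset (Finset (Fin n))} {B : Finset (Fin n)} (hB : B ∈ 𝓝) :
    indVec n B ∈ polytope 𝓝 :=
  subset_convexHull ℝ _ ⟨B, hB, rfl⟩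

lemma polytope_subset_unitCube (𝓝 : Finset (Finset (Fin n))) :
    polytope 𝓝 ⊆ Set.univ.pi fun _ => Set.Icc 0 1 :=
  convexHull_min (by rintro _ ⟨B, -, rfl⟩ i -; by_cases i ∈ B <;> simp_all [indVec])
    (convex_pi fun _ _ => convex_Icc 0 1)

lemma indVec_mem_extremePoints_unitCube (B : Finset (Fin n)) :
    indVec n B ∈ Set.extremePoints ℝ (Set.univ.pi fun _ => Set.Icc (0 : ℝ) 1) := by
  rw [extremePoints_pi]
  intro i _
  by_cases i ∈ B <;> simp_all [indVec]

lemma indVec_mem_polytope_iff {𝓝 : Finset (Finset (Fin n))} {B : Finset (Fin n)} :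
    indVec n B ∈ polytope 𝓝 ↔ B ∈ 𝓝 := by
  refine ⟨fun h => ?_, indVec_mem_polytope⟩
  have hext : indVec n B ∈ Set.extremePoints ℝ (polytope 𝓝) :=
    inter_extremePoints_subset_extremePoints_of_subset (polytope_subset_unitCube 𝓝)
      ⟨h, indVec_mem_extremePoints_unitCube B⟩
  obtain ⟨B', hB', hBB'⟩ := extremePoints_convexHull_subset hext
  rwa [← indVec_injective hBB']

lemma isCompact_polytope (𝓝 : Finset (Finset (Fin n))) : IsCompact (polytope 𝓝) :=
  (𝓝.finite_toSet.image _).isCompact_convexHull (𝕜 := ℝ)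

lemma convex_polytope (𝓝 : Finset (Finset (Fin n))) : Convex ℝ (polytope 𝓝) :=
  convex_convexHull ℝ _

lemma dist_indVec_le_one (B B' : Finset (Fin n)) : dist (indVec n B) (indVec n B') ≤ 1 :=
  (dist_pi_le_iff zero_le_one).mpr fun i => by
    simp only [indVec, Real.dist_eq]
    split_ifs <;> norm_num

def wsum {α : Type*} [AddCommMonoid α] (ω : Fin n → α) (B : Finset (Fin n)) : α := ∑ e ∈ B, ω e

lemma map_indVec (l : (Fin n → ℝ) →ₗ[ℝ] ℝ) (B : Finset (Fin n)) :
    l (indVec n B) = wsum (fun e => l (Pi.single e 1)) B := by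
  have : indVec n B = ∑ e ∈ B, Pi.single e 1 := by
    ext i
    simp [indVec, Finset.sum_apply, Pi.single_apply]
  rw [this, map_sum, wsum]

lemma map_le_of_mem_polytope (l : (Fin n → ℝ) →ₗ[ℝ] ℝ) {𝓝 : Finset (Finset (Fin n))} {c : ℝ}
    (hc : ∀ B ∈ 𝓝, l (indVec n B) ≤ c) {x : Fin n → ℝ} (hx : x ∈ polytope 𝓝) : l x ≤ c :=
  convexHull_min (by rintro _ ⟨B, hB, rfl⟩; exact hc B hB) (convex_halfSpace_le l.isLinear c) hx

lemma wsum_insert_erase {α : Type*} [AddCommGroup α] (ω : Fin n → α) {B : Finset (Fin n)}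
    {b b' : Fin n} (hb : b ∈ B) (hb' : b' ∉ B) :
    wsum ω (insert b' (B.erase b)) = wsum ω B - ω b + ω b' := by
  rw [wsum, wsum, Finset.sum_insert fun h => hb' (Finset.mem_of_mem_erase h),
    Finset.sum_erase_eq_sub hb]
  abel

lemma insert_erase_sdiff_of_mem {B B' : Finset (Fin n)} {b b' : Fin n} (hb' : b' ∈ B') :
    insert b' (B.erase b) \ B' = (B \ B').erase b := by
  ext x
  simp only [Finset.mem_sdiff, Finset.mem_insert, Finset.mem_erase]
  constructor
  · rintro ⟨rfl | ⟨hxb, hx⟩, hxB'⟩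
    · exact absurd hb' hxB'
    · exact ⟨hxb, hx, hxB'⟩
  · rintro ⟨hxb, hx, hxB'⟩
    exact ⟨Or.inr ⟨hxb, hx⟩, hxB'⟩

/-- Induction on `#(B' \ B)`: exchanging an element of `B' \ B` for one of `B \ B'` does not
decrease `#(S ∩ B')`, provided the element leaving lies outside `S` whenever `B \ B' ⊄ S`; such an
element exists by exchanging into `B` and maximality of `B`. -/
lemma card_inter_le_of_isMax_wsum {α : Type*} [AddCommGroup α] [LinearOrder α]
    [IsOrderedAddMonoid α] {M : Finset (Finset (Fin n))} (hM : IsBases M) (ω : Fin n → α)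
    {B : Finset (Fin n)} (hB : B ∈ M) (hmax : ∀ B' ∈ M, wsum ω B' ≤ wsum ω B)
    {S : Finset (Fin n)} (hS : ∀ e ∈ S, ∀ e', ω e ≤ ω e' → e' ∈ S)
    {B' : Finset (Fin n)} (hB' : B' ∈ M) : #(S ∩ B') ≤ #(S ∩ B) := by
  classical
  induction hk : #(B' \ B) generalizing B' with
  | zero =>
    exact card_le_card (inter_subset_inter_left (sdiff_eq_empty_iff_subset.mp
      (card_eq_zero.mp hk)))
  | succ k ih =>
    have hout : ∀ b ∈ B \ B', b ∉ S → ∃ b' ∈ B' \ B, b' ∉ S := by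
      intro b hb hbS
      obtain ⟨b', hb', hmem⟩ := hM B hB B' hB' b hb
      refine ⟨b', hb', fun hb'S => hbS (hS b' hb'S b ?_)⟩
      have := hmax _ hmem
      rwa [wsum_insert_erase ω (mem_sdiff.mp hb).1 (mem_sdiff.mp hb').2, sub_add_eq_add_sub,
        sub_le_iff_le_add, add_le_add_iff_left] at this
    obtain ⟨b₁, hb₁, hb₁S⟩ : ∃ b₁ ∈ B' \ B, b₁ ∉ S ∨ B \ B' ⊆ S := by
      by_cases hBS : B \ B' ⊆ S
      · obtain ⟨b₁, hb₁⟩ := card_pos.mp (by omega : 0 < #(B' \ B))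
        exact ⟨b₁, hb₁, Or.inr hBS⟩
      · obtain ⟨b, hb, hbS⟩ := not_subset.mp hBS
        obtain ⟨b₁, hb₁, hb₁S⟩ := hout b hb hbS
        exact ⟨b₁, hb₁, Or.inl hb₁S⟩
    obtain ⟨b₂, hb₂, hB''⟩ := hM B' hB' B hB b₁ hb₁
    refine le_trans ?_ (ih hB'' ?_)
    · rcases hb₁S with hb₁S | hBS
      · refine card_le_card fun x hx => ?_
        simp only [mem_inter, mem_insert, mem_erase] at hx ⊢
        exact ⟨hx.1, Or.inr ⟨fun h => hb₁S (h ▸ hx.1), hx.2⟩⟩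
      · rw [inter_insert_of_mem (hBS hb₂), card_insert_of_notMem
          fun h => (mem_sdiff.mp hb₂).2 (mem_of_mem_erase (mem_inter.mp h).2), inter_erase]
        have := pred_card_le_card_erase (s := S ∩ B') (a := b₁)
        omega
    · rw [insert_erase_sdiff_of_mem (mem_sdiff.mp hb₂).1, card_erase_of_mem hb₁, hk]
      rfl

lemma wsum_toLex (lam ω : Fin n → ℝ) (B : Finset (Fin n)) :
    wsum (fun e => toLex (lam e, ω e)) B = toLex (wsum lam B, wsum ω B) :=
  (map_sum (toLexAddEquiv (ℝ × ℝ)) (fun e => (lam e, ω e)) B).symm.trans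
    (congrArg toLex (Prod.ext (by simp [wsum, Prod.fst_sum]) (by simp [wsum, Prod.snd_sum])))

/-- On `L = {lam > v}` both bases meet equally by the greedy property for `lam`, and adding the
part of `S` at level `v` to `L` gives an up-set `R` for the lexicographic order. -/
lemma card_inter_filter_eq_le_of_isMax_lex {M : Finset (Finset (Fin n))} (hM : IsBases M)
    (lam ω : Fin n → ℝ) {S : Finset (Fin n)}
    (hS : ∀ e ∈ S, ∀ e', lam e = lam e' → ω e ≤ ω e' → e' ∈ S) {B₀ : Finset (Fin n)}
    (hB₀ : B₀ ∈ M)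
    (hB₀max : ∀ B' ∈ M, toLex (wsum lam B', wsum ω B') ≤ toLex (wsum lam B₀, wsum ω B₀))
    {B : Finset (Fin n)} (hB : B ∈ M) (hBmax : ∀ B' ∈ M, wsum lam B' ≤ wsum lam B) (v : ℝ) :
    #{e ∈ S ∩ B | lam e = v} ≤ #{e ∈ S ∩ B₀ | lam e = v} := by
  classical
  have hB₀lam : ∀ B' ∈ M, wsum lam B' ≤ wsum lam B₀ := fun B' hB' => by
    rcases Prod.Lex.toLex_le_toLex.mp (hB₀max B' hB') with h | h
    exacts [h.le, h.1.le]
  set L : Finset (Fin n) := {e | v < lam e}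
  set R : Finset (Fin n) := {e | v < lam e ∨ (lam e = v ∧ e ∈ S)}
  have hR (X : Finset (Fin n)) : #(R ∩ X) = #(L ∩ X) + #{e ∈ S ∩ X | lam e = v} := by
    rw [← card_union_of_disjoint]
    · congr 1
      ext e
      simp only [R, L, mem_inter, mem_filter, mem_univ, true_and, mem_union]
      tauto
    · refine disjoint_left.mpr fun e he he' => ?_
      simp only [L, mem_inter, mem_filter, mem_univ, true_and] at he he'
      exact he.1.ne' he'.2
  have hL : #(L ∩ B) = #(L ∩ B₀) := by
    have hLup : ∀ e ∈ L, ∀ e', lam e ≤ lam e' → e' ∈ L := fun e he e' h => by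
      simp only [L, mem_filter, mem_univ, true_and] at he ⊢
      exact he.trans_le h
    exact le_antisymm (card_inter_le_of_isMax_wsum hM lam hB₀ hB₀lam hLup hB)
      (card_inter_le_of_isMax_wsum hM lam hB hBmax hLup hB₀)
  have hRup : ∀ e ∈ R, ∀ e', toLex (lam e, ω e) ≤ toLex (lam e', ω e') → e' ∈ R := by
    intro e he e' h
    simp only [R, mem_filter, mem_univ, true_and] at he ⊢
    rcases Prod.Lex.toLex_le_toLex.mp h with h | ⟨h, h'⟩ <;> dsimp only at h
    · rcases he with he | ⟨rfl, -⟩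
      exacts [Or.inl (he.trans h), Or.inl h]
    · rcases he with he | ⟨rfl, heS⟩
      exacts [Or.inl (h ▸ he : v < lam e'), Or.inr ⟨h.symm, hS e heS e' h h'⟩]
  have hRle : #(R ∩ B) ≤ #(R ∩ B₀) := by
    refine card_inter_le_of_isMax_wsum hM (fun e => toLex (lam e, ω e)) hB₀ ?_ hRup hB
    simpa only [wsum_toLex] using hB₀max
  rw [hR, hR] at hRle
  omega

lemma card_inter_le_of_isMax_lex {M : Finset (Finset (Fin n))} (hM : IsBases M)
    (lam ω : Fin n → ℝ) {S : Finset (Fin n)}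
    (hS : ∀ e ∈ S, ∀ e', lam e = lam e' → ω e ≤ ω e' → e' ∈ S) {B₀ : Finset (Fin n)}
    (hB₀ : B₀ ∈ M)
    (hB₀max : ∀ B' ∈ M, toLex (wsum lam B', wsum ω B') ≤ toLex (wsum lam B₀, wsum ω B₀))
    {B : Finset (Fin n)} (hB : B ∈ M) (hBmax : ∀ B' ∈ M, wsum lam B' ≤ wsum lam B) :
    #(S ∩ B) ≤ #(S ∩ B₀) := by
  classical
  have hfiber (X : Finset (Fin n)) :
      #(S ∩ X) = ∑ v ∈ univ.image lam, #{e ∈ S ∩ X | lam e = v} :=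
    card_eq_sum_card_fiberwise fun e _ => mem_image_of_mem lam (mem_univ e)
  rw [hfiber, hfiber]
  exact sum_le_sum fun v _ =>
    card_inter_filter_eq_le_of_isMax_lex hM lam ω hS hB₀ hB₀max hB hBmax v

def IsMaximalFlag (C : Fin n → Finset (Fin n)) : Prop :=
  (∀ i, #(C i) = (i : ℕ) + 1) ∧ ∀ i j, i ≤ j → C i ⊆ C j

/-- Equal to `n - i` if `e` first appears in `C i`. -/
def flagCount (C : Fin n → Finset (Fin n)) (e : Fin n) : ℕ := #{j | e ∈ C j}

noncomputable def flagWeight (C : Fin n → Finset (Fin n)) (e : Fin n) : ℝ := 2 ^ flagCount C e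

noncomputable def flagTerm (𝓝 : Finset (Finset (Fin n))) (C : Fin n → Finset (Fin n)) :
    FreeAbelianGroup (Fin n → Finset (Fin n) × ℕ) :=
  if 𝓝 = ∅ then 0 else FreeAbelianGroup.of fun i => (C i, mrank 𝓝 (C i))

open Classical in
lemma flagH_eq_sum_flagTerm (𝓝 : Finset (Finset (Fin n))) :
    flagH 𝓝 = ∑ C with IsMaximalFlag C, flagTerm 𝓝 C := by
  unfold flagH flagTerm
  split_ifs
  · simp
  · exact sum_congr (filter_congr fun _ _ => Iff.rfl) fun _ _ => rfl

section Flag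

variable {C : Fin n → Finset (Fin n)}

lemma flagCount_le (C : Fin n → Finset (Fin n)) (e : Fin n) : flagCount C e ≤ n :=
  (card_filter_le _ _).trans_eq (card_fin n)

lemma mem_flag_iff (hmono : Monotone C) {e : Fin n} {j : Fin n} :
    e ∈ C j ↔ n - j ≤ flagCount C e := by
  constructor
  · intro he
    rw [← Fin.card_Ici]
    exact card_le_card fun k hk => mem_filter.mpr ⟨mem_univ k, hmono (mem_Ici.mp hk) he⟩
  · intro hle
    by_contra he
    have : flagCount C e ≤ #(Ioi j) := card_le_card fun k hk => mem_Ioi.mpr <|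
      lt_of_not_ge fun hkj => he (hmono hkj (mem_filter.mp hk).2)
    rw [Fin.card_Ioi] at this
    omega

lemma flagCount_injective (hC : IsMaximalFlag C) : Function.Injective (flagCount C) := by
  intro e e' h
  have hn : 0 < n := Fin.pos e
  have hlast : C ⟨n - 1, by omega⟩ = univ :=
    eq_univ_of_card _ (by rw [hC.1, Fintype.card_fin]; simp only; omega)
  have hpos : 1 ≤ flagCount C e := by
    have := (mem_flag_iff hC.2).mp (hlast ▸ mem_univ e)
    simp only at this
    omega
  have hle := flagCount_le C e
  -- both `e` and `e'` enter the flag at step `k`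
  set k := n - flagCount C e
  have hk : k < n := by omega
  have hmem : ∀ x, flagCount C x = flagCount C e → x ∈ C ⟨k, hk⟩ := fun x hx =>
    (mem_flag_iff hC.2).mpr (by simp only; omega)
  rcases Nat.eq_zero_or_pos k with hk0 | hk0
  · have hcard : #(C ⟨k, hk⟩) ≤ 1 := by rw [hC.1]; simp only; omega
    exact card_le_one.mp hcard e (hmem e rfl) e' (hmem e' h.symm)
  · have hprev : ∀ x, flagCount C x = flagCount C e → x ∉ C ⟨k - 1, by omega⟩ := fun x hx hmem =>
      absurd ((mem_flag_iff hC.2).mp hmem) (by simp only; omega)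
    have hcard : #(C ⟨k, hk⟩ \ C ⟨k - 1, by omega⟩) ≤ 1 := by
      rw [card_sdiff_of_subset (hC.2 _ _ (Fin.mk_le_mk.mpr (by omega))), hC.1, hC.1]
      simp only
      omega
    exact card_le_one.mp hcard e (mem_sdiff.mpr ⟨hmem e rfl, hprev e rfl⟩)
      e' (mem_sdiff.mpr ⟨hmem e' h.symm, hprev e' h.symm⟩)

lemma mem_flag_of_flagWeight_le (hmono : Monotone C) {j : Fin n} {e e' : Fin n}
    (he : e ∈ C j) (hee' : flagWeight C e ≤ flagWeight C e') : e' ∈ C j := by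
  rw [mem_flag_iff hmono] at he ⊢
  exact he.trans ((pow_le_pow_iff_right₀ one_lt_two).mp hee')

lemma wsum_flagWeight_injective (hC : IsMaximalFlag C) :
    Function.Injective (wsum (flagWeight C)) := by
  classical
  have hnat (B : Finset (Fin n)) :
      wsum (flagWeight C) B = ((∑ k ∈ B.image (flagCount C), 2 ^ k : ℕ) : ℝ) := by
    rw [sum_image fun x _ y _ hxy => flagCount_injective hC hxy]
    push_cast
    rfl
  intro B B' h
  rw [hnat, hnat, Nat.cast_inj] at h
  exact image_injective (flagCount_injective hC) (geomSum_injective le_rfl h)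

end Flag

open Filter Topology in
lemma Set.OrdConnected.eventually_mem_or_eventually_notMem_nhdsGT {I : Set ℝ}
    (hI : I.OrdConnected) (t : ℝ) :
    (∀ᶠ u in 𝓝[>] t, u ∈ I) ∨ ∀ᶠ u in 𝓝[>] t, u ∉ I := by
  by_cases hfreq : ∃ᶠ u in 𝓝[>] t, u ∈ I
  · left
    obtain ⟨p, hpI, htp⟩ := (hfreq.and_eventually self_mem_nhdsWithin).exists
    filter_upwards [Ioo_mem_nhdsGT htp] with u hu
    obtain ⟨q, hqI, htq, hqu⟩ :=
      (hfreq.and_eventually (Ioo_mem_nhdsGT hu.1)).exists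
    exact hI.out hqI hpI ⟨hqu.le, hu.2.le⟩
  · exact Or.inr (not_frequently.mp hfreq)

open Filter Topology in
lemma Set.OrdConnected.isGreatest_iff {I : Set ℝ} (hI : I.OrdConnected) {t : ℝ} :
    IsGreatest I t ↔ t ∈ I ∧ ¬ ∀ᶠ u in 𝓝[>] t, u ∈ I := by
  refine ⟨fun ht => ⟨ht.1, fun h => ?_⟩, fun ⟨htI, ht⟩ => ⟨htI, fun y hy => ?_⟩⟩
  · obtain ⟨u, huI, htu⟩ := (h.and self_mem_nhdsWithin).exists
    exact (ht.2 huI).not_gt htu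
  · refine le_of_not_gt fun hty => ht ?_
    filter_upwards [Ioo_mem_nhdsGT hty] with u hu
    exact hI.out htI hy (Set.Ioo_subset_Icc_self hu)

open Classical Filter Topology in
lemma sum_filter_eventually_mem_nhdsGT_eq_zero {ι : Type*} (s : Finset ι) (I : ι → Set ℝ)
    (c : ι → ℤ) (hconn : ∀ i ∈ s, (I i).OrdConnected) (h : ∀ t, ∑ i ∈ s with t ∈ I i, c i = 0)
    (t : ℝ) : ∑ i ∈ s with ∀ᶠ u in 𝓝[>] t, u ∈ I i, c i = 0 := by
  have hev : ∀ᶠ u in 𝓝[>] t, ∀ i ∈ s, (u ∈ I i ↔ ∀ᶠ u in 𝓝[>] t, u ∈ I i) := by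
    refine (eventually_all_finset s).mpr fun i hi => ?_
    rcases (hconn i hi).eventually_mem_or_eventually_notMem_nhdsGT t with hin | hout
    · filter_upwards [hin] with u hu using iff_of_true hu hin
    · filter_upwards [hout] with u hu
      exact iff_of_false hu fun hin => (hin.and hout).exists.elim fun _ h => h.2 h.1
  obtain ⟨u, hu⟩ := hev.exists
  rw [← h u]
  exact sum_congr (filter_congr fun i hi => (hu i hi).symm) fun _ _ => rfl

open Classical Filter Topology in
/-- Each nonempty interval is counted at its maximum, the only point where its indicator function
differs from its right limit. -/
lemma sum_filter_nonempty_eq_zero_of_isCompact_ordConnected {ι : Type*} (s : Finset ι)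
    (I : ι → Set ℝ) (c : ι → ℤ) (hcomp : ∀ i ∈ s, IsCompact (I i))
    (hconn : ∀ i ∈ s, (I i).OrdConnected) (h : ∀ t, ∑ i ∈ s with t ∈ I i, c i = 0) :
    ∑ i ∈ s with (I i).Nonempty, c i = 0 := by
  have hmax : ∀ t, ∑ i ∈ s with IsGreatest (I i) t, c i = 0 := by
    intro t
    have hsplit : {i ∈ s | t ∈ I i} =
        {i ∈ s | ∀ᶠ u in 𝓝[>] t, u ∈ I i} ∪ {i ∈ s | IsGreatest (I i) t} := by
      rw [← filter_or]
      refine filter_congr fun i hi => ?_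
      rw [(hconn i hi).isGreatest_iff]
      have : (∀ᶠ u in 𝓝[>] t, u ∈ I i) → t ∈ I i := fun hev =>
        (hcomp i hi).isClosed.mem_of_frequently_of_tendsto hev.frequently
          (tendsto_nhdsWithin_of_tendsto_nhds tendsto_id)
      tauto
    have hdisj : Disjoint {i ∈ s | ∀ᶠ u in 𝓝[>] t, u ∈ I i} {i ∈ s | IsGreatest (I i) t} :=
      disjoint_filter.mpr fun i hi hev hmax => ((hconn i hi).isGreatest_iff.mp hmax).2 hev
    have := h t
    rwa [hsplit, sum_union hdisj, sum_filter_eventually_mem_nhdsGT_eq_zero s I c hconn h,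
      zero_add] at this
  calc ∑ i ∈ s with (I i).Nonempty, c i
      = ∑ i ∈ s with (I i).Nonempty, ∑ _t ∈ {sSup (I i)}, c i := by simp
    _ = ∑ t ∈ {i ∈ s | (I i).Nonempty}.image (fun i => sSup (I i)),
          ∑ i ∈ s with IsGreatest (I i) t, c i := by
        refine sum_comm' fun i t => ?_
        simp only [mem_filter, mem_singleton, mem_image]
        constructor
        · rintro ⟨⟨hi, hne⟩, rfl⟩
          exact ⟨⟨hi, (hcomp i hi).isGreatest_sSup hne⟩, i, ⟨hi, hne⟩, rfl⟩
        · rintro ⟨⟨hi, hgr⟩, -⟩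
          exact ⟨⟨hi, hgr.nonempty⟩, hgr.csSup_eq.symm⟩
    _ = 0 := sum_eq_zero fun t _ => hmax t

lemma convex_setOf_snoc_mem {k : ℕ} {K : Set (Fin (k + 1) → ℝ)} (hK : Convex ℝ K)
    (y : Fin k → ℝ) : Convex ℝ {t : ℝ | (Fin.snoc y t : Fin (k + 1) → ℝ) ∈ K} := by
  intro t₁ h₁ t₂ h₂ a b ha hb hab
  have hcomb : (Fin.snoc y (a • t₁ + b • t₂) : Fin (k + 1) → ℝ) =
      a • (Fin.snoc y t₁ : Fin (k + 1) → ℝ) + b • (Fin.snoc y t₂ : Fin (k + 1) → ℝ) := by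
    ext j
    induction j using Fin.lastCases with
    | last => simp
    | cast i => simp [← add_mul, hab]
  simpa only [Set.mem_ofPred_eq, hcomb] using hK h₁ h₂ ha hb hab

lemma isCompact_setOf_snoc_mem {k : ℕ} {K : Set (Fin (k + 1) → ℝ)} (hK : IsCompact K)
    (y : Fin k → ℝ) : IsCompact {t : ℝ | (Fin.snoc y t : Fin (k + 1) → ℝ) ∈ K} :=
  (hK.image (continuous_apply (Fin.last k))).of_isClosed_subset
    (hK.isClosed.preimage (continuous_const.finSnoc continuous_id))
    fun t ht => ⟨_, ht, by simp⟩

open Classical in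
/-- `K ↦ [K ≠ ∅]`, the Euler characteristic, is a valuation on compact convex sets. -/
theorem sum_filter_nonempty_eq_zero_of_isCompact_convex {k : ℕ} {ι : Type*} (s : Finset ι)
    (K : ι → Set (Fin k → ℝ)) (c : ι → ℤ) (hcomp : ∀ i ∈ s, IsCompact (K i))
    (hconv : ∀ i ∈ s, Convex ℝ (K i)) (h : ∀ x, ∑ i ∈ s with x ∈ K i, c i = 0) :
    ∑ i ∈ s with (K i).Nonempty, c i = 0 := by
  induction k with
  | zero =>
    rw [← h default]
    refine sum_congr (filter_congr fun i _ => ?_) fun _ _ => rfl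
    exact ⟨fun ⟨x, hx⟩ => Subsingleton.elim x default ▸ hx, fun hx => ⟨_, hx⟩⟩
  | succ k ih =>
    -- project away the last coordinate; the fibres are compact intervals
    let π : (Fin (k + 1) → ℝ) →ₗ[ℝ] Fin k → ℝ := LinearMap.funLeft ℝ ℝ Fin.castSucc
    have hfibre : ∀ i y,
        y ∈ π '' K i ↔ {t : ℝ | (Fin.snoc y t : Fin (k + 1) → ℝ) ∈ K i}.Nonempty := by
      refine fun i y => ⟨?_, fun ⟨t, ht⟩ => ⟨_, ht, funext fun j => by simp [π, LinearMap.funLeft]⟩⟩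
      rintro ⟨x, hx, rfl⟩
      refine ⟨x (Fin.last k), ?_⟩
      show Fin.snoc (Fin.init x) (x (Fin.last k)) ∈ K i
      rwa [Fin.snoc_init_self]
    have := ih (fun i => π '' K i)
      (fun i hi => (hcomp i hi).image π.continuous_of_finiteDimensional)
      (fun i hi => (hconv i hi).linear_image π) fun y => ?_
    · simpa only [Set.image_nonempty] using this
    simp only [hfibre]
    exact sum_filter_nonempty_eq_zero_of_isCompact_ordConnected s _ c
      (fun i hi => isCompact_setOf_snoc_mem (hcomp i hi) y)
      (fun i hi => (convex_setOf_snoc_mem (hconv i hi) y).ordConnected) fun t => h _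

open Classical in
lemma sum_powerset_filter_forall_eq_zero {ι : Type*} (T : Finset ι) (p : ι → Prop)
    (h : ∃ a ∈ T, p a) : ∑ A ∈ T.powerset with ∀ a ∈ A, p a, (-1 : ℤ) ^ #A = 0 := by
  obtain ⟨a, ha, hpa⟩ := h
  have : {A ∈ T.powerset | ∀ a ∈ A, p a} = {a ∈ T | p a}.powerset := by
    ext A
    simp only [mem_filter, mem_powerset, subset_iff]
    exact ⟨fun h x hx => ⟨h.1 hx, h.2 x hx⟩, fun h => ⟨fun x hx => (h hx).1, fun x hx => (h hx).2⟩⟩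
  rw [this]
  exact sum_powerset_neg_one_pow_card_of_nonempty ⟨a, mem_filter.mpr ⟨ha, hpa⟩⟩

lemma linearCombination_indVec (ω : Fin n → ℝ) (B : Finset (Fin n)) :
    Fintype.linearCombination ℝ ω (indVec n B) = wsum ω B := by
  rw [map_indVec]
  simp

lemma polytope_inter_cap_nonempty_iff {𝓝 : Finset (Finset (Fin n))} {B : Finset (Fin n)}
    (hB : B ∈ 𝓝) (ω : Fin n → ℝ) {γ δ : ℝ} (hγ : 0 < γ)
    (hgap : ∀ B' ∈ 𝓝, wsum ω B < wsum ω B' → wsum ω B + γ ≤ wsum ω B') (hδ : 0 < δ)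
    (hδ₁ : δ ≤ 1) :
    (polytope 𝓝 ∩ ({x | wsum ω B + δ * γ ≤ Fintype.linearCombination ℝ ω x} ∩
      Metric.closedBall (indVec n B) δ)).Nonempty ↔ ∃ B' ∈ 𝓝, wsum ω B < wsum ω B' := by
  constructor
  · rintro ⟨x, hx, hxl, -⟩
    by_contra! hle
    have := map_le_of_mem_polytope _ (fun B' hB' => (linearCombination_indVec ω B').trans_le
      (hle B' hB')) hx
    nlinarith [mul_pos hδ hγ, hxl.out]
  · rintro ⟨B', hB', hlt⟩
    refine ⟨AffineMap.lineMap (indVec n B) (indVec n B') δ, (convex_polytope _).lineMap_mem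
      (indVec_mem_polytope hB) (indVec_mem_polytope hB') ⟨hδ.le, hδ₁⟩, ?_, ?_⟩
    · simp only [Set.mem_ofPred_eq, AffineMap.lineMap_apply_module, map_add, map_smul,
        linearCombination_indVec, smul_eq_mul]
      nlinarith [mul_le_mul_of_nonneg_left (hgap B' hB' hlt) hδ.le]
    · rw [Metric.mem_closedBall, dist_lineMap_left, Real.norm_of_nonneg hδ.le]
      exact mul_le_of_le_one_right hδ.le (dist_indVec_le_one B B')

variable {m : ℕ} {𝓑 : Finset (Finset (Fin n))} {𝓜 : Fin m → Finset (Finset (Fin n))}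

lemma mem_interMatroid {A : Finset (Fin m)} {B : Finset (Fin n)} :
    B ∈ interMatroid 𝓑 𝓜 A ↔ B ∈ 𝓑 ∧ ∀ a ∈ A, B ∈ 𝓜 a := by
  classical
  simp [interMatroid, indVec_mem_polytope_iff]

open Filter Topology in
lemma eventually_mem_polytope_imp_mem (𝓜 : Fin m → Finset (Finset (Fin n))) (v : Fin n → ℝ) :
    ∀ᶠ x in 𝓝 v, ∀ a, x ∈ polytope (𝓜 a) → v ∈ polytope (𝓜 a) := by
  refine eventually_all.mpr fun a => ?_
  by_cases hv : v ∈ polytope (𝓜 a)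
  · exact Eventually.of_forall fun _ _ => hv
  · filter_upwards [(isCompact_polytope _).isClosed.isOpen_compl.mem_nhds hv] with x hx h
    exact absurd h hx

namespace IsMatroidSubdivision

variable (hsub : IsMatroidSubdivision 𝓑 𝓜)
include hsub

lemma iUnion_polytope : ⋃ a, polytope (𝓜 a) = polytope 𝓑 := hsub.2.2.1

lemma subset (a : Fin m) : 𝓜 a ⊆ 𝓑 := fun _ hB =>
  indVec_mem_polytope_iff.mp <|
    hsub.iUnion_polytope ▸ Set.mem_iUnion.mpr ⟨a, indVec_mem_polytope hB⟩

lemma exists_mem_piece {B : Finset (Fin n)} (hB : B ∈ 𝓑) : ∃ a, B ∈ 𝓜 a := by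
  have := hsub.iUnion_polytope ▸ indVec_mem_polytope hB
  obtain ⟨a, ha⟩ := Set.mem_iUnion.mp this
  exact ⟨a, indVec_mem_polytope_iff.mp ha⟩

lemma isExposed_biInter {A : Finset (Fin m)} {a₀ : Fin m} (ha₀ : a₀ ∈ A) :
    IsExposed ℝ (polytope (𝓜 a₀)) (⋂ a ∈ A, polytope (𝓜 a)) := by
  classical
  have hfaces : ∀ a, IsExposed ℝ (polytope (𝓜 a₀)) (polytope (𝓜 a₀) ∩ polytope (𝓜 a)) := by
    intro a
    by_cases h : a = a₀
    · rw [h, Set.inter_self]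
    · exact (hsub.2.2.2.2 a₀ a (Ne.symm h)).1
  have := IsExposed.sInter (A.image_nonempty.mpr ⟨a₀, ha₀⟩)
    (F := A.image fun a => polytope (𝓜 a₀) ∩ polytope (𝓜 a)) (by simpa using fun a _ => hfaces a)
  have hF : ⋂₀ ↑(A.image fun a => polytope (𝓜 a₀) ∩ polytope (𝓜 a)) = ⋂ a ∈ A, polytope (𝓜 a) := by
    ext x
    simp only [Finset.coe_image, Set.sInter_image, Finset.mem_coe, Set.mem_iInter,
      Set.mem_inter_iff]
    exact ⟨fun h a ha => (h a ha).2, fun h a ha => ⟨h a₀ ha₀, h a ha⟩⟩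
  rwa [hF] at this

lemma polytope_interMatroid (A : Finset (Fin m)) :
    polytope (interMatroid 𝓑 𝓜 A) = polytope 𝓑 ∩ ⋂ a ∈ A, polytope (𝓜 a) := by
  refine subset_antisymm (convexHull_min ?_ ?_) ?_
  · rintro _ ⟨B, hB, rfl⟩
    obtain ⟨hB𝓑, hBA⟩ := mem_interMatroid.mp hB
    exact ⟨indVec_mem_polytope hB𝓑, Set.mem_iInter₂.mpr fun a ha => indVec_mem_polytope (hBA a ha)⟩
  · exact (convex_polytope _).inter (convex_iInter₂ fun a _ => convex_polytope _)
  rcases A.eq_empty_or_nonempty with rfl | ⟨a₀, ha₀⟩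
  · simp [interMatroid]
  rintro x ⟨-, hx⟩
  have hexp := hsub.isExposed_biInter ha₀
  -- a face of a polytope is the convex hull of the vertices it contains (Krein–Milman)
  have hvert : Set.extremePoints ℝ (⋂ a ∈ A, polytope (𝓜 a)) ⊆
      indVec n '' interMatroid 𝓑 𝓜 A := by
    intro y hy
    rw [hexp.isExtreme.extremePoints_eq] at hy
    obtain ⟨B, hB, rfl⟩ := extremePoints_convexHull_subset hy.2
    refine ⟨B, mem_interMatroid.mpr ⟨hsub.subset a₀ hB, fun a ha => ?_⟩, rfl⟩
    exact indVec_mem_polytope_iff.mp (Set.mem_iInter₂.mp hy.1 a ha)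
  rw [← closure_convexHull_extremePoints (hexp.isCompact (isCompact_polytope _))
    (hexp.convex (convex_polytope _))] at hx
  exact closure_minimal (convexHull_mono hvert) (isCompact_polytope _).isClosed hx

lemma interMatroid_eq_filter_isMax (A : Finset (Fin m)) (hA : (interMatroid 𝓑 𝓜 A).Nonempty) :
    ∃ M, IsBases M ∧ ∃ lam : Fin n → ℝ,
      interMatroid 𝓑 𝓜 A = {B ∈ M | ∀ B' ∈ M, wsum lam B' ≤ wsum lam B} := by
  classical
  rcases A.eq_empty_or_nonempty with rfl | ⟨a₀, ha₀⟩
  · exact ⟨𝓑, hsub.1, 0, by ext B; simp [interMatroid, wsum]⟩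
  have hexp := hsub.isExposed_biInter ha₀
  obtain ⟨B₁, hB₁⟩ := hA
  have hface : polytope (interMatroid 𝓑 𝓜 A) = ⋂ a ∈ A, polytope (𝓜 a) := by
    rw [hsub.polytope_interMatroid, Set.inter_eq_right]
    exact fun x hx => hsub.iUnion_polytope ▸ Set.mem_iUnion.mpr ⟨a₀, Set.mem_iInter₂.mp hx a₀ ha₀⟩
  obtain ⟨l, hl⟩ := hexp (hface ▸ ⟨_, indVec_mem_polytope hB₁⟩)
  refine ⟨𝓜 a₀, hsub.2.1 a₀, fun e => l (Pi.single e 1), ?_⟩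
  have hl' : ∀ B, wsum (fun e => l (Pi.single e 1)) B = l (indVec n B) :=
    fun B => (map_indVec l.toLinearMap B).symm
  ext B
  simp only [Finset.mem_filter, hl']
  rw [← indVec_mem_polytope_iff, hface, hl, Set.mem_ofPred_eq, indVec_mem_polytope_iff]
  refine and_congr_right fun _ => ⟨fun h B' hB' => h _ (indVec_mem_polytope hB'), fun h y hy => ?_⟩
  exact map_le_of_mem_polytope l.toLinearMap h hy

open Classical in
/-- At each point of `S` this is inclusion–exclusion over the pieces through it, which are all
indexed by `T`; the Euler characteristic turns it into a count of nonempty intersections. -/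
lemma sum_powerset_filter_polytope_inter_nonempty_eq_zero {S : Set (Fin n → ℝ)}
    (hS : IsClosed S) (hSconv : Convex ℝ S) (T : Finset (Fin m))
    (hT : ∀ x ∈ S, ∀ a, x ∈ polytope (𝓜 a) → a ∈ T) :
    ∑ A ∈ T.powerset with (polytope (interMatroid 𝓑 𝓜 A) ∩ S).Nonempty, (-1 : ℤ) ^ #A = 0 := by
  refine sum_filter_nonempty_eq_zero_of_isCompact_convex _ _ _
    (fun A _ => (isCompact_polytope _).inter_right hS)
    (fun A _ => (convex_polytope _).inter hSconv) fun x => ?_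
  have hmem (A : Finset (Fin m)) : x ∈ polytope (interMatroid 𝓑 𝓜 A) ∩ S ↔
      (x ∈ polytope 𝓑 ∧ x ∈ S) ∧ ∀ a ∈ A, x ∈ polytope (𝓜 a) := by
    rw [hsub.polytope_interMatroid, Set.mem_inter_iff, Set.mem_inter_iff, Set.mem_iInter₂]
    tauto
  simp only [hmem]
  by_cases hx : x ∈ polytope 𝓑 ∧ x ∈ S
  · simp only [hx, true_and]
    obtain ⟨a, ha⟩ := Set.mem_iUnion.mp (hsub.iUnion_polytope ▸ hx.1)
    convert sum_powerset_filter_forall_eq_zero T (fun a => x ∈ polytope (𝓜 a))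
      ⟨a, hT x hx.2 a ha, ha⟩
  · simp only [hx, false_and, filter_false, sum_empty]

open Classical in
lemma sum_powerset_filter_exists_wsum_lt_eq_zero (ω : Fin n → ℝ) {B : Finset (Fin n)}
    (hB : B ∈ 𝓑) :
    ∑ A ∈ ({a | B ∈ 𝓜 a} : Finset (Fin m)).powerset with
      ∃ B' ∈ interMatroid 𝓑 𝓜 A, wsum ω B < wsum ω B', (-1 : ℤ) ^ #A = 0 := by
  by_cases hbetter : ∃ B' ∈ 𝓑, wsum ω B < wsum ω B'
  swap
  · refine sum_eq_zero fun A hA => absurd (mem_filter.mp hA).2 ?_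
    rintro ⟨B', hB', hlt⟩
    exact hbetter ⟨B', (mem_interMatroid.mp hB').1, hlt⟩
  obtain ⟨B₁, hB₁, hB₁min⟩ := exists_min_image {B' ∈ 𝓑 | wsum ω B < wsum ω B'} (wsum ω)
    (let ⟨B', hB', h⟩ := hbetter; ⟨B', mem_filter.mpr ⟨hB', h⟩⟩)
  have hgap : ∀ B' ∈ 𝓑, wsum ω B < wsum ω B' → wsum ω B + (wsum ω B₁ - wsum ω B) ≤ wsum ω B' :=
    fun B' hB' hlt => by linarith [hB₁min B' (mem_filter.mpr ⟨hB', hlt⟩)]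
  obtain ⟨δ, hδ, hball⟩ := Metric.nhds_basis_closedBall.eventually_iff.mp
    (eventually_mem_polytope_imp_mem 𝓜 (indVec n B))
  have hδ' : 0 < min δ 1 := lt_min hδ one_pos
  -- the slab of margin `min δ 1 * γ`, with `γ` the least weight gap above `B`, inside the ball
  -- around `e_B` met only by the pieces containing `B`
  have := hsub.sum_powerset_filter_polytope_inter_nonempty_eq_zero
    (S := {x | wsum ω B + min δ 1 * (wsum ω B₁ - wsum ω B) ≤ Fintype.linearCombination ℝ ω x} ∩
      Metric.closedBall (indVec n B) (min δ 1))
    ((isClosed_le continuous_const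
      (Fintype.linearCombination ℝ ω).continuous_of_finiteDimensional).inter
      Metric.isClosed_closedBall)
    ((convex_halfSpace_ge (Fintype.linearCombination ℝ ω).isLinear _).inter (convex_closedBall _ _))
    {a | B ∈ 𝓜 a} fun x hx a ha => mem_filter.mpr ⟨mem_univ a, indVec_mem_polytope_iff.mp
      (hball (Metric.closedBall_subset_closedBall (min_le_left _ _) hx.2) a ha)⟩
  rwa [filter_congr fun A hA => polytope_inter_cap_nonempty_iff
    (mem_interMatroid.mpr ⟨hB, fun a ha => (mem_filter.mp (mem_powerset.mp hA ha)).2⟩) ω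
    (sub_pos.mpr (mem_filter.mp hB₁).2)
    (fun B' hB' => hgap B' (mem_interMatroid.mp hB').1) hδ' (min_le_right _ _)] at this

variable {C : Fin n → Finset (Fin n)}

lemma mrank_interMatroid_eq_card_inter (hmono : Monotone C) {A : Finset (Fin m)}
    {B₀ : Finset (Fin n)} (hB₀ : B₀ ∈ interMatroid 𝓑 𝓜 A)
    (hB₀max : ∀ B ∈ interMatroid 𝓑 𝓜 A, wsum (flagWeight C) B ≤ wsum (flagWeight C) B₀)
    (j : Fin n) : mrank (interMatroid 𝓑 𝓜 A) (C j) = #(C j ∩ B₀) := by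
  obtain ⟨M, hM, lam, hface⟩ := hsub.interMatroid_eq_filter_isMax A ⟨B₀, hB₀⟩
  rw [hface] at hB₀ hB₀max ⊢
  obtain ⟨hB₀M, hB₀lam⟩ := mem_filter.mp hB₀
  have hB₀lex : ∀ B ∈ M, toLex (wsum lam B, wsum (flagWeight C) B) ≤
      toLex (wsum lam B₀, wsum (flagWeight C) B₀) := by
    intro B hB
    refine Prod.Lex.toLex_le_toLex.mpr ((hB₀lam B hB).lt_or_eq.imp id fun heq => ⟨heq, ?_⟩)
    have heq : wsum lam B = wsum lam B₀ := heq
    exact hB₀max B (mem_filter.mpr ⟨hB, fun B' hB' => heq ▸ hB₀lam B' hB'⟩)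
  refine le_antisymm (Finset.sup_le fun B hB => ?_) (le_sup (f := fun B => #(C j ∩ B)) hB₀)
  exact card_inter_le_of_isMax_lex hM lam (flagWeight C)
    (fun e he e' _ => mem_flag_of_flagWeight_le hmono he) hB₀M hB₀lex (mem_filter.mp hB).1
    (mem_filter.mp hB).2

open Classical in
lemma sum_filter_isMax_wsum_eq_zero (ω : Fin n → ℝ) {B : Finset (Fin n)} (hB : B ∈ 𝓑) :
    ∑ A : Finset (Fin m) with
      B ∈ interMatroid 𝓑 𝓜 A ∧ ∀ B' ∈ interMatroid 𝓑 𝓜 A, wsum ω B' ≤ wsum ω B,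
      (-1 : ℤ) ^ #A = 0 := by
  set T : Finset (Fin m) := {a | B ∈ 𝓜 a}
  have hfilter : (univ.filter fun A : Finset (Fin m) => B ∈ interMatroid 𝓑 𝓜 A ∧
        ∀ B' ∈ interMatroid 𝓑 𝓜 A, wsum ω B' ≤ wsum ω B) =
      T.powerset.filter fun A => ¬ ∃ B' ∈ interMatroid 𝓑 𝓜 A, wsum ω B < wsum ω B' := by
    ext A
    simp [mem_interMatroid, T, subset_iff, hB]
  have hsplit := sum_filter_add_sum_filter_not T.powerset
    (fun A => ∃ B' ∈ interMatroid 𝓑 𝓜 A, wsum ω B < wsum ω B') fun A => (-1 : ℤ) ^ #A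
  obtain ⟨a, ha⟩ := hsub.exists_mem_piece hB
  rw [hsub.sum_powerset_filter_exists_wsum_lt_eq_zero ω hB, zero_add,
    sum_powerset_neg_one_pow_card_of_nonempty ⟨a, mem_filter.mpr ⟨mem_univ a, ha⟩⟩] at hsplit
  rw [hfilter, hsplit]

open Classical in
lemma sum_neg_one_pow_smul_flagTerm_eq_zero (hC : IsMaximalFlag C) :
    ∑ A : Finset (Fin m), (-1 : ℤ) ^ #A • flagTerm (interMatroid 𝓑 𝓜 A) C = 0 := by
  -- the filter below is the singleton of the flag-heaviest basis of `M_A`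
  have hterm (A : Finset (Fin m)) : flagTerm (interMatroid 𝓑 𝓜 A) C =
      ∑ B ∈ 𝓑 with B ∈ interMatroid 𝓑 𝓜 A ∧
        ∀ B' ∈ interMatroid 𝓑 𝓜 A, wsum (flagWeight C) B' ≤ wsum (flagWeight C) B,
        FreeAbelianGroup.of fun i => (C i, #(C i ∩ B)) := by
    rcases (interMatroid 𝓑 𝓜 A).eq_empty_or_nonempty with hA | hA
    · simp [flagTerm, hA]
    obtain ⟨B₀, hB₀, hB₀max⟩ := exists_max_image _ (wsum (flagWeight C)) hA
    have htop : {B ∈ 𝓑 | B ∈ interMatroid 𝓑 𝓜 A ∧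
        ∀ B' ∈ interMatroid 𝓑 𝓜 A, wsum (flagWeight C) B' ≤ wsum (flagWeight C) B} = {B₀} := by
      refine eq_singleton_iff_unique_mem.mpr
        ⟨mem_filter.mpr ⟨(mem_interMatroid.mp hB₀).1, hB₀, hB₀max⟩, fun B hB => ?_⟩
      obtain ⟨-, hBA, hBmax⟩ := mem_filter.mp hB
      exact wsum_flagWeight_injective hC (le_antisymm (hB₀max B hBA) (hBmax B₀ hB₀))
    rw [htop, sum_singleton, flagTerm, if_neg hA.ne_empty]
    simp only [hsub.mrank_interMatroid_eq_card_inter hC.2 hB₀ hB₀max]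
  simp only [hterm, sum_filter, smul_sum]
  rw [sum_comm]
  refine sum_eq_zero fun B hB => ?_
  simp only [smul_ite, smul_zero]
  rw [← sum_filter, ← sum_smul, hsub.sum_filter_isMax_wsum_eq_zero _ hB, zero_smul]

end IsMatroidSubdivision

end

/-- The maximal-flag subset-rank function `H` is a valuation under matroid
subdivisions. -/
theorem statement_19 (n : ℕ) :
    IsValuation fun 𝓑 : Finset (Finset (Fin n)) => flagH 𝓑 := by
  intro m 𝓑 𝓜 hsub
  classical
  simp only [flagH_eq_sum_flagTerm, smul_sum]
  rw [sum_comm]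
  exact sum_eq_zero fun C hC => hsub.sum_neg_one_pow_smul_flagTerm_eq_zero (mem_filter.mp hC).2
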